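/- Let 2 ≤ p < 3, κ ∈ (0,1] with 2 + κ > p, T > 0, and let ω be a control on [0,T]. Let x : [0,T] → ℝ^m and y : [0,T] → ℝ^d satisfy ‖x_t − x_s‖ ≤ K ω(s,t)^{1/p} and ‖y_t − y_s‖ ≤ K ω(s,t)^{1/p} for all (s,t) ∈ Δ_T, and let A : Δ_T → ℝ^d ⊗ ℝ^m satisfy ‖A_{s,t}‖ ≤ L ω(s,t)^{2/p} and the Chen relation A_{s,t} = A_{s,u} + A_{u,t} + (y_u − y_s) ⊗ (x_t − x_u) for all 0 ≤ s ≤ u ≤ t ≤ T. Let φ : ℝ^d → ℝ^{d'} be differentiable with Dφ bounded and κ-Hölder. Then there exists a unique B : Δ_T → ℝ^{d'} ⊗ ℝ^m such that: (i) B satisfies the Chen relation B_{s,t} = B_{s,u} + B_{u,t} + (φ(y_u) − φ(y_s)) ⊗ (x_t − x_u) for all 0 ≤ s ≤ u ≤ t ≤ T; (ii) for some constant C (depending only on ‖Dφ‖_∞, the κ-Hölder constant of Dφ, K, L, p, κ and ω(0,T)), ‖B_{s,t} − Dφ(y_s) A_{s,t}‖ ≤ C ω(s,t)^{(2+κ)/p}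 for all (s,t) ∈ Δ_T. In particular ‖B_{s,t}‖ ≤ L′ ω(s,t)^{2/p} for some constant L′. -/

import Mathlib

noncomputable section

/-- `E n` is the Euclidean space `ℝ^n`. -/
abbrev E (n : ℕ) : Type := EuclideanSpace ℝ (Fin n)

/-- A control on `[0,T]`: continuous, vanishing on the diagonal, nonnegative and
superadditive function on the simplex `Δ_T = {(s,t) : 0 ≤ s ≤ t ≤ T}`. -/
def IsControl (T : ℝ) (ω : ℝ → ℝ → ℝ) : Prop :=
  ContinuousOn (fun q : ℝ × ℝ => ω q.1 q.2) {q : ℝ × ℝ | 0 ≤ q.1 ∧ q.1 ≤ q.2 ∧ q.2 ≤ T} ∧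
  (∀ s t, 0 ≤ s → s ≤ t → t ≤ T → 0 ≤ ω s t) ∧
  (∀ t, 0 ≤ t → t ≤ T → ω t t = 0) ∧
  (∀ s u t, 0 ≤ s → s ≤ u → u ≤ t → t ≤ T → ω s u + ω u t ≤ ω s t)

/-- The elementary tensor `u ⊗ v`, realised in `ℝ^a ⊗ ℝ^b ≃ ℝ^{a×b}`. -/
def tensor {a b : ℕ} (u : E a) (v : E b) : EuclideanSpace ℝ (Fin a × Fin b) :=
  WithLp.toLp 2 (fun p : Fin a × Fin b => u p.1 * v p.2)


/-- The action of a linear map `M : ℝ^d → ℝ^{d'}` on `ℝ^d ⊗ ℝ^m` as `M ⊗ id`. -/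
def lTensor {d d' m : ℕ} (M : E d →L[ℝ] E d')
    (A : EuclideanSpace ℝ (Fin d × Fin m)) : EuclideanSpace ℝ (Fin d' × Fin m) :=
  WithLp.toLp 2 (fun p : Fin d' × Fin m => ∑ k : Fin d, M (EuclideanSpace.single k 1) p.1 * A (k, p.2))

variable {T : ℝ} {ω : ℝ → ℝ → ℝ}

lemma ctrl_mono (hω : IsControl T ω) {s s' t' t : ℝ} (h0 : 0 ≤ s) (h1 : s ≤ s')
    (h2 : s' ≤ t') (h3 : t' ≤ t) (h4 : t ≤ T) : ω s' t' ≤ ω s t := by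
  obtain ⟨-, hnn, -, hsup⟩ := hω
  have k1 := hsup s s' t' h0 h1 h2 (le_trans h3 h4)
  have k2 := hsup s t' t h0 (le_trans h1 h2) h3 h4
  have k3 := hsup s' t' t (le_trans h0 h1) h2 h3 h4
  have n1 := hnn s s' h0 h1 (le_trans (le_trans h2 h3) h4)
  have n2 := hnn t' t (le_trans (le_trans h0 h1) h2) h3 h4
  linarith

lemma ctrl_chain (hω : IsControl T ω) (σ : ℕ → ℝ) (hmono : ∀ i, σ i ≤ σ (i + 1))
    (h0 : 0 ≤ σ 0) (hT : ∀ i, σ i ≤ T) (N : ℕ) :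
    ∑ i ∈ Finset.range N, ω (σ i) (σ (i + 1)) ≤ ω (σ 0) (σ N) := by
  obtain ⟨-, hnn, hz, hsup⟩ := hω
  have hm : Monotone σ := monotone_nat_of_le_succ hmono
  have h0i : ∀ i, 0 ≤ σ i := fun i => le_trans h0 (hm (Nat.zero_le i))
  induction N with
  | zero => simp [hz (σ 0) h0 (hT 0)]
  | succ N ih =>
    rw [Finset.sum_range_succ]
    have := hsup (σ 0) (σ N) (σ (N + 1)) h0 (hm (Nat.zero_le N)) (hmono N) (hT (N + 1))
    linarith

lemma exists_mid (hω : IsControl T ω) (s t : ℝ) :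
    ∃ u : ℝ, 0 ≤ s → s ≤ t → t ≤ T →
      s ≤ u ∧ u ≤ t ∧ ω s u ≤ ω s t / 2 ∧ ω u t ≤ ω s t / 2 := by
  by_cases h : 0 ≤ s ∧ s ≤ t ∧ t ≤ T
  · obtain ⟨h0, hst, hT⟩ := h
    obtain ⟨hcont, hnn, hz, hsup⟩ := hω
    have hc1 : ContinuousOn ((fun q : ℝ × ℝ => ω q.1 q.2) ∘ fun u : ℝ => (s, u)) (Set.Icc s t) := by
      apply hcont.comp (Continuous.continuousOn (by continuity))
      intro u hu
      exact ⟨h0, hu.1, le_trans hu.2 hT⟩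
    have hc2 : ContinuousOn ((fun q : ℝ × ℝ => ω q.1 q.2) ∘ fun u : ℝ => (u, t)) (Set.Icc s t) := by
      apply hcont.comp (Continuous.continuousOn (by continuity))
      intro u hu
      exact ⟨le_trans h0 hu.1, hu.2, hT⟩
    have hf : ContinuousOn (fun u => ω s u - ω u t) (Set.Icc s t) := hc1.sub hc2
    have hivt := intermediate_value_Icc hst hf
    have h0mem : (0 : ℝ) ∈ Set.Icc (ω s s - ω s t) (ω s t - ω t t) := by
      rw [hz s h0 (le_trans hst hT), hz t (le_trans h0 hst) hT]
      constructor <;> simp [hnn s t h0 hst hT]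
    obtain ⟨u, hu, hfu⟩ := hivt h0mem
    refine ⟨u, fun _ _ _ => ⟨hu.1, hu.2, ?_, ?_⟩⟩ <;>
    · have := hsup s u t h0 hu.1 hu.2 hT
      simp only [sub_eq_zero] at hfu
      linarith
  · exact ⟨s, fun h1 h2 h3 => absurd ⟨h1, h2, h3⟩ h⟩

def ctrlMid (hω : IsControl T ω) (s t : ℝ) : ℝ := (exists_mid hω s t).choose

lemma ctrlMid_spec (hω : IsControl T ω) {s t : ℝ} (h0 : 0 ≤ s) (hst : s ≤ t) (hT : t ≤ T) :
    s ≤ ctrlMid hω s t ∧ ctrlMid hω s t ≤ t ∧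
      ω s (ctrlMid hω s t) ≤ ω s t / 2 ∧ ω (ctrlMid hω s t) t ≤ ω s t / 2 :=
  (exists_mid hω s t).choose_spec h0 hst hT

def ctrlGrid (hω : IsControl T ω) (s t : ℝ) : ℕ → ℕ → ℝ
  | 0, i => if i = 0 then s else t
  | (n + 1), i =>
    if i % 2 = 0 then ctrlGrid hω s t n (i / 2)
    else ctrlMid hω (ctrlGrid hω s t n (i / 2)) (ctrlGrid hω s t n (i / 2 + 1))

lemma ctrlGrid_even (hω : IsControl T ω) (s t : ℝ) (n j : ℕ) :
    ctrlGrid hω s t (n + 1) (2 * j) = ctrlGrid hω s t n j := by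
  simp [ctrlGrid, Nat.mul_mod_right, Nat.mul_div_cancel_left _ (by norm_num : 0 < 2)]

lemma ctrlGrid_odd (hω : IsControl T ω) (s t : ℝ) (n j : ℕ) :
    ctrlGrid hω s t (n + 1) (2 * j + 1) =
      ctrlMid hω (ctrlGrid hω s t n j) (ctrlGrid hω s t n (j + 1)) := by
  have h1 : (2 * j + 1) % 2 = 1 := by omega
  have h2 : (2 * j + 1) / 2 = j := by omega
  simp [ctrlGrid, h1, h2]

lemma ctrlGrid_props (hω : IsControl T ω) {s t : ℝ} (h0 : 0 ≤ s) (hst : s ≤ t)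
    (hT : t ≤ T) (n : ℕ) :
    (∀ i, s ≤ ctrlGrid hω s t n i ∧ ctrlGrid hω s t n i ≤ t) ∧
    ctrlGrid hω s t n 0 = s ∧
    (∀ i, 2 ^ n ≤ i → ctrlGrid hω s t n i = t) ∧
    (∀ i, ctrlGrid hω s t n i ≤ ctrlGrid hω s t n (i + 1)) ∧
    (∀ i, ω (ctrlGrid hω s t n i) (ctrlGrid hω s t n (i + 1)) ≤ ω s t / 2 ^ n) := by
  induction n with
  | zero =>
    have g0 : ctrlGrid hω s t 0 0 = s := by simp [ctrlGrid]
    have g1 : ∀ i, i ≠ 0 → ctrlGrid hω s t 0 i = t := fun i hi => by simp [ctrlGrid, hi]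
    refine ⟨fun i => ?_, g0, fun i hi => g1 i (by omega), fun i => ?_, fun i => ?_⟩
    · by_cases h : i = 0
      · subst h; rw [g0]; exact ⟨le_refl s, hst⟩
      · rw [g1 i h]; exact ⟨hst, le_refl t⟩
    · by_cases h : i = 0
      · subst h; rw [g0, g1 1 (by omega)]; exact hst
      · rw [g1 i h, g1 (i+1) (by omega)]
    · by_cases h : i = 0
      · subst h; rw [g0, g1 1 (by omega), pow_zero, div_one]
      · rw [g1 i h, g1 (i+1) (by omega), (hω.2.2.1) t (le_trans h0 hst) hT]
        have hnn := hω.2.1 s t h0 hst hT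
        positivity
  | succ n ih =>
    obtain ⟨hmem, hzero, htop, hmono, hhalf⟩ := ih
    -- facts about mid applied to grid intervals
    have hmid : ∀ j, ctrlGrid hω s t n j ≤ ctrlMid hω (ctrlGrid hω s t n j) (ctrlGrid hω s t n (j+1)) ∧
        ctrlMid hω (ctrlGrid hω s t n j) (ctrlGrid hω s t n (j+1)) ≤ ctrlGrid hω s t n (j+1) ∧
        ω (ctrlGrid hω s t n j) (ctrlMid hω (ctrlGrid hω s t n j) (ctrlGrid hω s t n (j+1))) ≤ ω s t / 2 ^ (n+1) ∧
        ω (ctrlMid hω (ctrlGrid hω s t n j) (ctrlGrid hω s t n (j+1))) (ctrlGrid hω s t n (j+1)) ≤ ω s t / 2 ^ (n+1) := by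
      intro j
      have hs0 : 0 ≤ ctrlGrid hω s t n j := le_trans h0 (hmem j).1
      have hsT : ctrlGrid hω s t n (j+1) ≤ T := le_trans (hmem (j+1)).2 hT
      obtain ⟨m1, m2, m3, m4⟩ := ctrlMid_spec hω hs0 (hmono j) hsT
      have hh := hhalf j
      have h2 : ω (ctrlGrid hω s t n j) (ctrlGrid hω s t n (j+1)) / 2 ≤ ω s t / 2 ^ n / 2 := by
        linarith
      rw [div_div, ← pow_succ] at h2
      exact ⟨m1, m2, le_trans m3 h2, le_trans m4 h2⟩
    refine ⟨fun i => ?_, ?_, fun i hi => ?_, fun i => ?_, fun i => ?_⟩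
    · rcases Nat.even_or_odd i with ⟨j, hj⟩ | ⟨j, hj⟩
      · subst hj; rw [show j + j = 2 * j by ring, ctrlGrid_even]
        exact hmem j
      · subst hj; rw [show 2 * j + 1 = 2 * j + 1 from rfl, ctrlGrid_odd]
        exact ⟨le_trans (hmem j).1 (hmid j).1, le_trans (hmid j).2.1 (hmem (j+1)).2⟩
    · rw [show (0 : ℕ) = 2 * 0 by ring, ctrlGrid_even]; exact hzero
    · rcases Nat.even_or_odd i with ⟨j, hj⟩ | ⟨j, hj⟩
      · subst hj; rw [show j + j = 2 * j by ring, ctrlGrid_even]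
        exact htop j (by omega)
      · subst hj; rw [ctrlGrid_odd]
        have hj1 : 2 ^ n ≤ j := by
          have : 2 ^ (n+1) = 2 * 2 ^ n := by ring
          omega
        rw [htop j hj1, htop (j+1) (by omega)]
        have := ctrlMid_spec hω (le_trans h0 (le_trans hst (le_refl t))) (le_refl t) hT
        exact le_antisymm this.2.1 this.1
    · rcases Nat.even_or_odd i with ⟨j, hj⟩ | ⟨j, hj⟩
      · subst hj; rw [show j + j = 2 * j by ring, ctrlGrid_even, ctrlGrid_odd]
        exact (hmid j).1
      · subst hj
        rw [show 2 * j + 1 + 1 = 2 * (j + 1) by ring, ctrlGrid_even, ctrlGrid_odd]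
        exact (hmid j).2.1
    · rcases Nat.even_or_odd i with ⟨j, hj⟩ | ⟨j, hj⟩
      · subst hj; rw [show j + j = 2 * j by ring, ctrlGrid_even, ctrlGrid_odd]
        exact (hmid j).2.2.1
      · subst hj
        rw [show 2 * j + 1 + 1 = 2 * (j + 1) by ring, ctrlGrid_even, ctrlGrid_odd]
        exact (hmid j).2.2.2


lemma sum_range_two_mul {M : Type*} [AddCommMonoid M] (N : ℕ) (f : ℕ → M) :
    ∑ i ∈ Finset.range (2 * N), f i = ∑ j ∈ Finset.range N, (f (2 * j) + f (2 * j + 1)) := by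
  induction N with
  | zero => simp
  | succ N ih =>
    rw [show 2 * (N + 1) = 2 * N + 1 + 1 by ring, Finset.sum_range_succ, Finset.sum_range_succ,
      Finset.sum_range_succ, ih]
    abel

lemma geom_partial_le {r : ℝ} (h0 : 0 ≤ r) (h1 : r < 1) (n : ℕ) :
    ∑ k ∈ Finset.range n, r ^ k ≤ (1 - r)⁻¹ := by
  have hs : Summable (fun k : ℕ => r ^ k) := summable_geometric_of_lt_one h0 h1
  calc ∑ k ∈ Finset.range n, r ^ k ≤ ∑' k : ℕ, r ^ k :=
        Summable.sum_le_tsum _ (fun i _ => pow_nonneg h0 i) hs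
    _ = (1 - r)⁻¹ := tsum_geometric_of_lt_one h0 h1

lemma norm_telescope {F : Type*} [NormedAddCommGroup F] (f : ℕ → F) (b : ℕ → ℝ)
    (hb : ∀ k, ‖f (k + 1) - f k‖ ≤ b k) (n : ℕ) :
    ‖f n - f 0‖ ≤ ∑ k ∈ Finset.range n, b k := by
  induction n with
  | zero => simp
  | succ n ih =>
    rw [Finset.sum_range_succ]
    calc ‖f (n + 1) - f 0‖ = ‖(f n - f 0) + (f (n + 1) - f n)‖ := by abel_nf
      _ ≤ ‖f n - f 0‖ + ‖f (n + 1) - f n‖ := norm_add_le _ _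
      _ ≤ _ := add_le_add ih (hb n)

lemma piLp_sum_apply {n : ℕ} {α : Type*} (s : Finset α) (f : α → E n) (j : Fin n) :
    (∑ x ∈ s, f x) j = ∑ x ∈ s, f x j := by
  induction s using Finset.cons_induction with
  | empty => simp [PiLp.zero_apply]
  | cons a s ha ih => rw [Finset.sum_cons, Finset.sum_cons, PiLp.add_apply, ih]

lemma euclid_decomp {d d' : ℕ} (M : E d →L[ℝ] E d') (u : E d) :
    M u = ∑ k : Fin d, u k • M (EuclideanSpace.single k 1) := by
  have hu : u = ∑ k : Fin d, u k • EuclideanSpace.single k (1 : ℝ) := by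
    ext j
    rw [piLp_sum_apply]
    simp [EuclideanSpace.single_apply, PiLp.smul_apply]
  conv_lhs => rw [hu]
  rw [map_sum]
  congr 1
  ext k
  rw [map_smul]

lemma euclid_apply {d d' : ℕ} (M : E d →L[ℝ] E d') (u : E d) (i : Fin d') :
    M u i = ∑ k : Fin d, u k * M (EuclideanSpace.single k 1) i := by
  rw [euclid_decomp M u, piLp_sum_apply]
  simp [PiLp.smul_apply]

lemma tensor_norm {a b : ℕ} (u : E a) (v : E b) : ‖tensor u v‖ = ‖u‖ * ‖v‖ := by
  rw [EuclideanSpace.norm_eq, EuclideanSpace.norm_eq, EuclideanSpace.norm_eq,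
    ← Real.sqrt_mul (by positivity)]
  congr 1
  rw [Finset.sum_mul_sum, Fintype.sum_prod_type]
  apply Finset.sum_congr rfl; intro i _
  apply Finset.sum_congr rfl; intro j _
  simp [tensor, norm_mul, mul_pow]

lemma lTensor_norm_le {d d' m : ℕ} (M : E d →L[ℝ] E d')
    (A : EuclideanSpace ℝ (Fin d × Fin m)) : ‖lTensor M A‖ ≤ ‖M‖ * ‖A‖ := by
  have key : ∀ j : Fin m, ∑ i : Fin d', ‖lTensor M A (i, j)‖ ^ 2
      ≤ ‖M‖ ^ 2 * ∑ k : Fin d, ‖A (k, j)‖ ^ 2 := by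
    intro j
    set w : E d := WithLp.toLp 2 (fun k => A (k, j)) with hw
    have hMw : ∀ i, lTensor M A (i, j) = M w i := by
      intro i
      rw [euclid_apply, lTensor, PiLp.toLp_apply]
      apply Finset.sum_congr rfl; intro k _
      simp [lTensor, hw, mul_comm]
    have h1 : ∑ i : Fin d', ‖lTensor M A (i, j)‖ ^ 2 = ‖M w‖ ^ 2 := by
      rw [EuclideanSpace.norm_eq, Real.sq_sqrt (by positivity)]
      exact Finset.sum_congr rfl fun i _ => by rw [hMw i]
    have h2 : ‖w‖ ^ 2 = ∑ k : Fin d, ‖A (k, j)‖ ^ 2 := by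
      rw [EuclideanSpace.norm_eq, Real.sq_sqrt (by positivity)]
    have h3 : ‖M w‖ ≤ ‖M‖ * ‖w‖ := M.le_opNorm w
    calc ∑ i : Fin d', ‖lTensor M A (i, j)‖ ^ 2 = ‖M w‖ ^ 2 := h1
      _ ≤ (‖M‖ * ‖w‖) ^ 2 := by
          apply pow_le_pow_left₀ (norm_nonneg _) h3
      _ = ‖M‖ ^ 2 * ∑ k : Fin d, ‖A (k, j)‖ ^ 2 := by rw [mul_pow, h2]
  rw [EuclideanSpace.norm_eq, EuclideanSpace.norm_eq]
  rw [show ‖M‖ * Real.sqrt (∑ p : Fin d × Fin m, ‖A p‖ ^ 2)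
      = Real.sqrt (‖M‖ ^ 2 * ∑ p : Fin d × Fin m, ‖A p‖ ^ 2) by
    rw [Real.sqrt_mul (by positivity), Real.sqrt_sq (norm_nonneg M)]]
  apply Real.sqrt_le_sqrt
  rw [Fintype.sum_prod_type_right]
  calc ∑ j : Fin m, ∑ i : Fin d', ‖lTensor M A (i, j)‖ ^ 2
      ≤ ∑ j : Fin m, ‖M‖ ^ 2 * ∑ k : Fin d, ‖A (k, j)‖ ^ 2 :=
        Finset.sum_le_sum fun j _ => key j
    _ = ‖M‖ ^ 2 * ∑ p : Fin d × Fin m, ‖A p‖ ^ 2 := by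
        rw [← Finset.mul_sum, Fintype.sum_prod_type_right]

lemma lTensor_add {d d' m : ℕ} (M : E d →L[ℝ] E d')
    (A B : EuclideanSpace ℝ (Fin d × Fin m)) :
    lTensor M (A + B) = lTensor M A + lTensor M B := by
  ext p
  simp [lTensor, PiLp.add_apply, mul_add, Finset.sum_add_distrib]

lemma lTensor_sub' {d d' m : ℕ} (M M' : E d →L[ℝ] E d')
    (A : EuclideanSpace ℝ (Fin d × Fin m)) :
    lTensor (M - M') A = lTensor M A - lTensor M' A := by
  ext p
  simp [lTensor, ContinuousLinearMap.sub_apply, PiLp.sub_apply, sub_mul,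
    Finset.sum_sub_distrib]

lemma lTensor_tensor {d d' m : ℕ} (M : E d →L[ℝ] E d') (u : E d) (v : E m) :
    lTensor M (tensor u v) = tensor (M u) v := by
  ext p
  simp only [lTensor, tensor]
  rw [euclid_apply, Finset.sum_mul]
  apply Finset.sum_congr rfl; intro k _
  ring

lemma div_pow_rpow (v : ℝ) (hv : 0 ≤ v) (Eexp : ℝ) (n : ℕ) :
    (v / 2 ^ n) ^ Eexp = v ^ Eexp * ((1 / 2 : ℝ) ^ Eexp) ^ n := by
  have h2 : ((2 : ℝ) ^ n) ^ Eexp = ((2 : ℝ) ^ Eexp) ^ n := by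
    rw [← Real.rpow_natCast (2 : ℝ) n, ← Real.rpow_mul (by norm_num : (0:ℝ) ≤ 2), mul_comm,
      Real.rpow_mul (by norm_num : (0:ℝ) ≤ 2), Real.rpow_natCast]
  have hq : ((1 / 2 : ℝ) ^ Eexp) = ((2 : ℝ) ^ Eexp)⁻¹ := by
    rw [one_div, Real.inv_rpow (by norm_num : (0:ℝ) ≤ 2)]
  have h2pos : (0 : ℝ) < ((2 : ℝ) ^ Eexp) ^ n :=
    pow_pos (Real.rpow_pos_of_pos (by norm_num) _) n
  rw [Real.div_rpow hv (by positivity), h2, hq, inv_pow, div_eq_mul_inv]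

lemma rpow_split2 {θ : ℝ} (hθ : 1 < θ) {v w : ℝ} (hv : 0 ≤ v) (hw : 0 ≤ w) (h1 : v ≤ w) :
    v ^ θ ≤ w ^ (θ - 1) * v := by
  have hv1 : v ^ θ = v ^ (θ - 1) * v := by
    nth_rewrite 1 [show θ = (θ - 1) + 1 by ring]
    rw [Real.rpow_add' hv (by linarith), Real.rpow_one]
  rw [hv1]
  exact mul_le_mul_of_nonneg_right (Real.rpow_le_rpow hv h1 (by linarith)) hv

lemma tensor_add_right {a b : ℕ} (u : E a) (v w : E b) :
    tensor u (v + w) = tensor u v + tensor u w := by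
  ext p
  simp [tensor, PiLp.add_apply, mul_add]

lemma tensor_sub_left {a b : ℕ} (u v : E a) (w : E b) :
    tensor (u - v) w = tensor u w - tensor v w := by
  ext p
  simp [tensor, PiLp.sub_apply, sub_mul]

lemma tensor_zero_left {a b : ℕ} (w : E b) : tensor (0 : E a) w = 0 := by
  ext p
  simp [tensor, PiLp.zero_apply]

lemma sewing {F : Type*} [NormedAddCommGroup F] [NormedSpace ℝ F] [CompleteSpace F]
    {T θ C : ℝ} {ω : ℝ → ℝ → ℝ} (hω : IsControl T ω) (hT : 0 ≤ T)
    (hθ : 1 < θ) (hC : 0 ≤ C) (Ξ : ℝ → ℝ → F)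
    (hδ : ∀ s u t, 0 ≤ s → s ≤ u → u ≤ t → t ≤ T →
      ‖Ξ s t - Ξ s u - Ξ u t‖ ≤ C * ω s t ^ θ) :
    ∃ Z : ℝ → F, ∃ C' : ℝ, 0 ≤ C' ∧ ∀ s t, 0 ≤ s → s ≤ t → t ≤ T →
      ‖Z t - Z s - Ξ s t‖ ≤ C' * ω s t ^ θ := by
  obtain ⟨hcont, hnn, hzero, hsup⟩ := id hω
  set g : ℕ → ℕ → ℝ := ctrlGrid hω 0 T with hgdef
  have gp : ∀ n : ℕ, (∀ i, 0 ≤ g n i ∧ g n i ≤ T) ∧ g n 0 = 0 ∧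
      (∀ i, 2 ^ n ≤ i → g n i = T) ∧ (∀ i, g n i ≤ g n (i + 1)) ∧
      (∀ i, ω (g n i) (g n (i + 1)) ≤ ω 0 T / 2 ^ n) :=
    fun n => ctrlGrid_props hω le_rfl hT le_rfl n
  set Ω : ℝ := ω 0 T with hΩdef
  have hΩ0 : 0 ≤ Ω := hnn 0 T le_rfl hT le_rfl
  set e : ℝ := (θ - 1) / 2 with hedef
  have he : 0 < e := by rw [hedef]; linarith
  set q : ℝ := (1 / 2 : ℝ) ^ e with hqdef
  have hq0 : 0 < q := Real.rpow_pos_of_pos (by norm_num) e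
  have hq1 : q < 1 := Real.rpow_lt_one (by norm_num) (by norm_num) he
  set q2 : ℝ := (1 / 2 : ℝ) ^ (θ - 1) with hq2def
  have hq20 : 0 < q2 := Real.rpow_pos_of_pos (by norm_num) _
  have hq21 : q2 < 1 := Real.rpow_lt_one (by norm_num) (by norm_num) (by linarith)
  have hθ0 : (0:ℝ) < θ := by linarith
  -- Ξ vanishes on the diagonal
  have hΞ0 : ∀ a, 0 ≤ a → a ≤ T → Ξ a a = 0 := by
    intro a h0 h1
    have := hδ a a a h0 le_rfl le_rfl h1
    rw [hzero a h0 h1, Real.zero_rpow (by linarith : θ ≠ 0), mul_zero] at this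
    have h2 : Ξ a a - Ξ a a - Ξ a a = -Ξ a a := by abel
    rw [h2, norm_neg] at this
    exact norm_eq_zero.mp (le_antisymm this (norm_nonneg _))
  -- splitting of powers
  have hsplit : ∀ v w₁ w₂ : ℝ, 0 ≤ v → 0 ≤ w₁ → 0 ≤ w₂ → v ≤ w₁ → v ≤ w₂ →
      v ^ θ ≤ w₁ ^ e * (w₂ ^ e * v) := by
    intro v w₁ w₂ hv hw1 hw2 h1 h2
    have hθeq : θ = e + (e + 1) := by rw [hedef]; ring
    have hv1 : v ^ θ = v ^ e * (v ^ e * v) := by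
      rw [hθeq, Real.rpow_add' hv (by rw [← hθeq]; linarith),
        Real.rpow_add' hv (by linarith), Real.rpow_one]
    rw [hv1]
    have a1 : v ^ e ≤ w₁ ^ e := Real.rpow_le_rpow hv h1 he.le
    have a2 : v ^ e ≤ w₂ ^ e := Real.rpow_le_rpow hv h2 he.le
    exact mul_le_mul a1 (mul_le_mul a2 le_rfl hv (Real.rpow_nonneg hw2 _))
      (mul_nonneg (Real.rpow_nonneg hv _) hv) (Real.rpow_nonneg hw1 _)
  have hsplit2 : ∀ v w₁ : ℝ, 0 ≤ v → 0 ≤ w₁ → v ≤ w₁ → v ^ θ ≤ w₁ ^ (θ - 1) * v :=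
    fun v w₁ hv hw1 h1 => rpow_split2 hθ hv hw1 h1
  -- the clamped Riemann sums
  set S : ℝ → ℝ → ℕ → F := fun s t n => ∑ i ∈ Finset.range (2 ^ n),
      Ξ (min t (max s (g n i))) (min t (max s (g n (i + 1)))) with hSdef
  -- basic clamp facts
  have hcl : ∀ s t r : ℝ, s ≤ t → s ≤ min t (max s r) := by
    intro s t r hst; exact le_min hst (le_max_left _ _)
  have hcr : ∀ s t r : ℝ, min t (max s r) ≤ t := fun s t r => min_le_left _ _
  have hcm : ∀ s t r r' : ℝ, r ≤ r' → min t (max s r) ≤ min t (max s r') := by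
    intro s t r r' h; exact min_le_min le_rfl (max_le_max le_rfl h)
  have hcω : ∀ s t r r' : ℝ, 0 ≤ s → s ≤ t → t ≤ T → 0 ≤ r → r ≤ r' → r' ≤ T →
      ω (min t (max s r)) (min t (max s r')) ≤ ω r r' := by
    intro s t r r' h0 hst htT hr hrr' hr'T
    rcases le_or_gt r' s with h | h
    · have e1 : min t (max s r') = s := by rw [max_eq_left h, min_eq_right hst]
      have e2 : min t (max s r) = s := by
        rw [max_eq_left (le_trans hrr' h), min_eq_right hst]
      rw [e1, e2, hzero s h0 (le_trans hst htT)]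
      exact hnn r r' hr hrr' hr'T
    · rcases le_or_gt t r with h2 | h2
      · have e1 : min t (max s r) = t := min_eq_left (le_trans h2 (le_max_right s r))
        have e2 : min t (max s r') = t :=
          min_eq_left (le_trans (le_trans h2 hrr') (le_max_right s r'))
        rw [e1, e2, hzero t (le_trans h0 hst) htT]
        exact hnn r r' hr hrr' hr'T
      · have k1 : r ≤ min t (max s r) := by
          rcases le_or_gt s r with h3 | h3
          · rw [max_eq_right h3]; exact le_min h2.le le_rfl
          · exact le_trans h3.le (le_min hst (le_max_left _ _))
        have k2 : min t (max s r') ≤ r' := by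
          rw [max_eq_right h.le]; exact min_le_right _ _
        exact ctrl_mono hω hr k1 (hcm s t r r' hrr') k2 hr'T
  have hczero : ∀ s t : ℝ, 0 ≤ s → s ≤ t → ∀ n, min t (max s (g n 0)) = s := by
    intro s t h0 hst n
    rw [(gp n).2.1, max_eq_left h0, min_eq_right hst]
  have hctop : ∀ s t : ℝ, s ≤ T → t ≤ T → ∀ n i, 2 ^ n ≤ i → min t (max s (g n i)) = t := by
    intro s t hsT htT n i hi
    rw [(gp n).2.2.1 i hi, max_eq_right hsT, min_eq_left htT]
  -- chain bound for clamped sums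
  have hchain : ∀ s t : ℝ, 0 ≤ s → s ≤ t → t ≤ T → ∀ n,
      ∑ i ∈ Finset.range (2 ^ n), ω (min t (max s (g n i))) (min t (max s (g n (i + 1)))) ≤
        ω s t := by
    intro s t h0 hst htT n
    have := ctrl_chain hω (fun i => min t (max s (g n i)))
      (fun i => hcm s t _ _ ((gp n).2.2.2.1 i))
      (le_trans h0 (hcl s t (g n 0) hst))
      (fun i => le_trans (hcr s t _) htT) (2 ^ n)
    rwa [hczero s t h0 hst n, hctop s t (le_trans hst htT) htT n (2 ^ n) le_rfl] at this
  -- geometric one-level estimates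
  have hSd : ∀ s t, 0 ≤ s → s ≤ t → t ≤ T → ∀ n,
      ‖S s t (n + 1) - S s t n‖ ≤ (C * Ω ^ e * (ω s t ^ e * ω s t)) * q ^ n := by
    intro s t h0 hst htT n
    have h2pow : 2 ^ (n + 1) = 2 * 2 ^ n := by ring
    have hrw : S s t (n + 1) = ∑ j ∈ Finset.range (2 ^ n),
        (Ξ (min t (max s (g n j))) (min t (max s (g (n+1) (2*j+1)))) +
         Ξ (min t (max s (g (n+1) (2*j+1)))) (min t (max s (g n (j+1))))) := by
      rw [hSdef]
      simp only []
      rw [h2pow, sum_range_two_mul]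
      apply Finset.sum_congr rfl
      intro j _
      rw [show 2*j+1+1 = 2*(j+1) by ring, hgdef, ctrlGrid_even, ctrlGrid_even]
    have hrw2 : S s t (n + 1) - S s t n = ∑ j ∈ Finset.range (2 ^ n),
        ((Ξ (min t (max s (g n j))) (min t (max s (g (n+1) (2*j+1)))) +
         Ξ (min t (max s (g (n+1) (2*j+1)))) (min t (max s (g n (j+1))))) -
         Ξ (min t (max s (g n j))) (min t (max s (g n (j+1))))) := by
      rw [hrw, hSdef, ← Finset.sum_sub_distrib]
    rw [hrw2]
    have hterm : ∀ j ∈ Finset.range (2 ^ n),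
        ‖(Ξ (min t (max s (g n j))) (min t (max s (g (n+1) (2*j+1)))) +
          Ξ (min t (max s (g (n+1) (2*j+1)))) (min t (max s (g n (j+1))))) -
          Ξ (min t (max s (g n j))) (min t (max s (g n (j+1))))‖ ≤
        C * (Ω ^ e * q ^ n * (ω s t ^ e *
          ω (min t (max s (g n j))) (min t (max s (g n (j+1)))))) := by
      intro j _
      set a := min t (max s (g n j))
      set μ := min t (max s (g (n+1) (2*j+1)))
      set b := min t (max s (g n (j+1)))
      have hab1 : a ≤ μ := by
        apply hcm
        have := (gp (n+1)).2.2.2.1 (2*j)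
        rwa [hgdef, ctrlGrid_even] at this
      have hab2 : μ ≤ b := by
        apply hcm
        have := (gp (n+1)).2.2.2.1 (2*j+1)
        rwa [show 2*j+1+1 = 2*(j+1) by ring, hgdef, ctrlGrid_even] at this
      have h0a : 0 ≤ a := le_trans h0 (hcl s t _ hst)
      have hbt : b ≤ T := le_trans (hcr s t _) htT
      have hδ' := hδ a μ b h0a hab1 hab2 hbt
      have hneg : (Ξ a μ + Ξ μ b) - Ξ a b = -(Ξ a b - Ξ a μ - Ξ μ b) := by abel
      rw [hneg, norm_neg]
      have hωab0 : 0 ≤ ω a b := hnn a b h0a (le_trans hab1 hab2) hbt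
      have hωab1 : ω a b ≤ Ω / 2 ^ n := by
        have h1 : ω a b ≤ ω (g n j) (g n (j+1)) :=
          hcω s t (g n j) (g n (j+1)) h0 hst htT ((gp n).1 j).1
            ((gp n).2.2.2.1 j) ((gp n).1 (j+1)).2
        exact le_trans h1 ((gp n).2.2.2.2 j)
      have hωab2 : ω a b ≤ ω s t :=
        ctrl_mono hω h0 (hcl s t _ hst) (le_trans hab1 hab2) (hcr s t _) htT
      have hsp := hsplit (ω a b) (Ω / 2 ^ n) (ω s t) hωab0 (by positivity)
        (hnn s t h0 hst htT) hωab1 hωab2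
      rw [div_pow_rpow Ω hΩ0 e n, ← hqdef] at hsp
      calc ‖Ξ a b - Ξ a μ - Ξ μ b‖ ≤ C * ω a b ^ θ := hδ'
        _ ≤ C * (Ω ^ e * q ^ n * (ω s t ^ e * ω a b)) :=
            mul_le_mul_of_nonneg_left hsp hC
    calc ‖∑ j ∈ Finset.range (2 ^ n), _‖ ≤ _ := norm_sum_le _ _
      _ ≤ ∑ j ∈ Finset.range (2 ^ n), C * (Ω ^ e * q ^ n * (ω s t ^ e *
            ω (min t (max s (g n j))) (min t (max s (g n (j+1)))))) :=
          Finset.sum_le_sum hterm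
      _ = C * (Ω ^ e * q ^ n * ω s t ^ e) * ∑ j ∈ Finset.range (2 ^ n),
            ω (min t (max s (g n j))) (min t (max s (g n (j+1)))) := by
          rw [Finset.mul_sum]
          apply Finset.sum_congr rfl
          intro j _; ring
      _ ≤ C * (Ω ^ e * q ^ n * ω s t ^ e) * ω s t := by
          apply mul_le_mul_of_nonneg_left (hchain s t h0 hst htT n)
          have := Real.rpow_nonneg hΩ0 e
          have := Real.rpow_nonneg (hnn s t h0 hst htT) e
          positivity
      _ = (C * Ω ^ e * (ω s t ^ e * ω s t)) * q ^ n := by ring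
  -- Cauchy sequences and the limit function Z
  have hCoef : ∀ s t, 0 ≤ s → s ≤ t → t ≤ T → 0 ≤ C * Ω ^ e * (ω s t ^ e * ω s t) := by
    intro s t h0 hst htT
    have h1 := Real.rpow_nonneg hΩ0 e
    have h2 := hnn s t h0 hst htT
    have h3 := Real.rpow_nonneg h2 e
    positivity
  have hcauchy : ∀ s t, 0 ≤ s → s ≤ t → t ≤ T → CauchySeq (fun n => S s t n) := by
    intro s t h0 hst htT
    apply cauchySeq_of_le_geometric q (C * Ω ^ e * (ω s t ^ e * ω s t)) hq1
    intro n
    rw [dist_eq_norm, norm_sub_rev]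
    exact hSd s t h0 hst htT n
  set Z : ℝ → F := fun t => Filter.limUnder Filter.atTop (fun n => S 0 t n) with hZdef
  have hZtend : ∀ t, 0 ≤ t → t ≤ T →
      Filter.Tendsto (fun n => S 0 t n) Filter.atTop (nhds (Z t)) :=
    fun t h0 htT => (hcauchy 0 t le_rfl h0 htT).tendsto_limUnder
  -- difference of global sums vs. the local clamped sum
  have hsplitsum : ∀ s t, 0 ≤ s → s ≤ t → t ≤ T → ∀ n,
      ‖S 0 t n - S 0 s n - S s t n‖ ≤ (C * Ω ^ (θ - 1) * Ω) * q2 ^ n := by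
    intro s t h0 hst htT n
    have hS0rw : ∀ u : ℝ, S 0 u n = ∑ i ∈ Finset.range (2 ^ n),
        Ξ (min u (g n i)) (min u (g n (i + 1))) := by
      intro u
      rw [hSdef]
      apply Finset.sum_congr rfl
      intro i _
      rw [max_eq_right ((gp n).1 i).1, max_eq_right ((gp n).1 (i + 1)).1]
    have hrw : S 0 t n - S 0 s n - S s t n = ∑ i ∈ Finset.range (2 ^ n),
        (Ξ (min t (g n i)) (min t (g n (i + 1))) - Ξ (min s (g n i)) (min s (g n (i + 1)))
          - Ξ (min t (max s (g n i))) (min t (max s (g n (i + 1))))) := by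
      rw [hS0rw t, hS0rw s, hSdef, ← Finset.sum_sub_distrib, ← Finset.sum_sub_distrib]
    rw [hrw]
    have hterm : ∀ i ∈ Finset.range (2 ^ n),
        ‖Ξ (min t (g n i)) (min t (g n (i + 1))) - Ξ (min s (g n i)) (min s (g n (i + 1)))
          - Ξ (min t (max s (g n i))) (min t (max s (g n (i + 1))))‖ ≤
          (C * Ω ^ (θ - 1) * q2 ^ n) * ω (g n i) (g n (i + 1)) := by
      intro i _
      set a := g n i with hadef
      set b := g n (i + 1) with hbdef
      have h0a : 0 ≤ a := ((gp n).1 i).1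
      have hab : a ≤ b := (gp n).2.2.2.1 i
      have hbT : b ≤ T := ((gp n).1 (i + 1)).2
      have hωab0 : 0 ≤ ω a b := hnn a b h0a hab hbT
      have hbound : ‖Ξ (min t a) (min t b) - Ξ (min s a) (min s b)
          - Ξ (min t (max s a)) (min t (max s b))‖ ≤ C * ω a b ^ θ := by
        have hpos : (0:ℝ) ≤ C * ω a b ^ θ := by
          have := Real.rpow_nonneg hωab0 θ
          positivity
        rcases le_or_gt b s with hbs | hbs
        · have e1 : min t a = a := min_eq_right (le_trans (le_trans hab hbs) hst)
          have e2 : min t b = b := min_eq_right (le_trans hbs hst)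
          have e3 : min s a = a := min_eq_right (le_trans hab hbs)
          have e4 : min s b = b := min_eq_right hbs
          have e5 : max s a = s := max_eq_left (le_trans hab hbs)
          have e6 : max s b = s := max_eq_left hbs
          have e7 : min t s = s := min_eq_right hst
          rw [e1, e2, e3, e4, e5, e6, e7, hΞ0 s h0 (le_trans hst htT)]
          simpa using hpos
        · rcases le_or_gt s a with hsa | hsa
          · have e3 : min s a = s := min_eq_left hsa
            have e4 : min s b = s := min_eq_left (le_trans hsa hab)
            have e5 : max s a = a := max_eq_right hsa
            have e6 : max s b = b := max_eq_right (le_trans hsa hab)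
            rw [e3, e4, e5, e6, hΞ0 s h0 (le_trans hst htT)]
            simpa using hpos
          · have e1 : min t a = a := min_eq_right (le_trans hsa.le hst)
            have e3 : min s a = a := min_eq_right hsa.le
            have e4 : min s b = s := min_eq_left hbs.le
            have e5 : max s a = s := max_eq_left hsa.le
            have e6 : max s b = b := max_eq_right hbs.le
            have e7 : min t s = s := min_eq_right hst
            rw [e1, e3, e4, e5, e6, e7]
            have hsm : s ≤ min t b := le_min hst hbs.le
            have hmT : min t b ≤ T := le_trans (min_le_right t b) hbT
            have h1 := hδ a s (min t b) h0a hsa.le hsm hmT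
            refine le_trans h1 (mul_le_mul_of_nonneg_left ?_ hC)
            apply Real.rpow_le_rpow (hnn a (min t b) h0a (le_trans hsa.le hsm) hmT)
              (ctrl_mono hω h0a le_rfl (le_trans hsa.le hsm) (min_le_right t b) hbT) hθ0.le
      have hsp := hsplit2 (ω a b) (Ω / 2 ^ n) hωab0 (by positivity) ((gp n).2.2.2.2 i)
      rw [div_pow_rpow Ω hΩ0 (θ - 1) n, ← hq2def] at hsp
      calc ‖Ξ (min t a) (min t b) - Ξ (min s a) (min s b)
          - Ξ (min t (max s a)) (min t (max s b))‖ ≤ C * ω a b ^ θ := hbound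
        _ ≤ C * (Ω ^ (θ - 1) * q2 ^ n * ω a b) := mul_le_mul_of_nonneg_left hsp hC
        _ = (C * Ω ^ (θ - 1) * q2 ^ n) * ω a b := by ring
    have hgchain : ∑ i ∈ Finset.range (2 ^ n), ω (g n i) (g n (i + 1)) ≤ Ω := by
      have := ctrl_chain hω (g n) ((gp n).2.2.2.1) (le_of_eq ((gp n).2.1).symm)
        (fun i => ((gp n).1 i).2) (2 ^ n)
      rwa [(gp n).2.1, (gp n).2.2.1 (2 ^ n) le_rfl] at this
    have hcoefnn : (0:ℝ) ≤ C * Ω ^ (θ - 1) * q2 ^ n := by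
      have := Real.rpow_nonneg hΩ0 (θ - 1)
      positivity
    calc ‖∑ i ∈ Finset.range (2 ^ n),
        (Ξ (min t (g n i)) (min t (g n (i + 1))) - Ξ (min s (g n i)) (min s (g n (i + 1)))
          - Ξ (min t (max s (g n i))) (min t (max s (g n (i + 1)))))‖
        ≤ ∑ i ∈ Finset.range (2 ^ n),
          ‖Ξ (min t (g n i)) (min t (g n (i + 1))) - Ξ (min s (g n i)) (min s (g n (i + 1)))
          - Ξ (min t (max s (g n i))) (min t (max s (g n (i + 1))))‖ := norm_sum_le _ _
      _ ≤ ∑ i ∈ Finset.range (2 ^ n), (C * Ω ^ (θ - 1) * q2 ^ n) * ω (g n i) (g n (i + 1)) :=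
          Finset.sum_le_sum hterm
      _ = (C * Ω ^ (θ - 1) * q2 ^ n) * ∑ i ∈ Finset.range (2 ^ n), ω (g n i) (g n (i + 1)) :=
          (Finset.mul_sum _ _ _).symm
      _ ≤ (C * Ω ^ (θ - 1) * q2 ^ n) * Ω := mul_le_mul_of_nonneg_left hgchain hcoefnn
      _ = (C * Ω ^ (θ - 1) * Ω) * q2 ^ n := by ring
  have hdiff0 : ∀ s t, 0 ≤ s → s ≤ t → t ≤ T →
      Filter.Tendsto (fun n => S 0 t n - S 0 s n - S s t n) Filter.atTop (nhds 0) := by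
    intro s t h0 hst htT
    apply squeeze_zero_norm (hsplitsum s t h0 hst htT)
    have := tendsto_pow_atTop_nhds_zero_of_lt_one hq20.le hq21
    simpa using this.const_mul (C * Ω ^ (θ - 1) * Ω)
  have hStend : ∀ s t, 0 ≤ s → s ≤ t → t ≤ T →
      Filter.Tendsto (fun n => S s t n) Filter.atTop (nhds (Z t - Z s)) := by
    intro s t h0 hst htT
    have h1 := (hZtend t (le_trans h0 hst) htT).sub (hZtend s h0 (le_trans hst htT))
    have h2 := h1.sub (hdiff0 s t h0 hst htT)
    have h3 : ∀ n, (S 0 t n - S 0 s n) - (S 0 t n - S 0 s n - S s t n) = S s t n :=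
      fun n => by abel
    have h4 := Filter.Tendsto.congr h3 h2
    simpa using h4
  have hS0' : ∀ s t, 0 ≤ s → s ≤ t → t ≤ T → S s t 0 = Ξ s t := by
    intro s t h0 hst htT
    rw [hSdef]
    simp only [pow_zero, Finset.sum_range_one]
    rw [hczero s t h0 hst 0, hctop s t (le_trans hst htT) htT 0 1 le_rfl]
  set K1 : ℝ := C * Ω ^ e * (1 - q)⁻¹ with hK1def
  have hK1nn : 0 ≤ K1 := by
    have h1 := Real.rpow_nonneg hΩ0 e
    have h2 : (0:ℝ) < 1 - q := by linarith
    positivity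
  have hG : ∀ s t, 0 ≤ s → s ≤ t → t ≤ T →
      ‖Z t - Z s - Ξ s t‖ ≤ K1 * (ω s t ^ e * ω s t) := by
    intro s t h0 hst htT
    have hcl2 : ∀ n, ‖S s t n - Ξ s t‖ ≤ (C * Ω ^ e * (ω s t ^ e * ω s t)) * (1 - q)⁻¹ := by
      intro n
      have h1 := norm_telescope (fun n => S s t n)
        (fun k => (C * Ω ^ e * (ω s t ^ e * ω s t)) * q ^ k)
        (fun k => hSd s t h0 hst htT k) n
      rw [hS0' s t h0 hst htT] at h1
      refine le_trans h1 ?_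
      rw [← Finset.mul_sum]
      exact mul_le_mul_of_nonneg_left (geom_partial_le hq0.le hq1 n) (hCoef s t h0 hst htT)
    have h2 : Filter.Tendsto (fun n => ‖S s t n - Ξ s t‖) Filter.atTop
        (nhds ‖Z t - Z s - Ξ s t‖) :=
      ((hStend s t h0 hst htT).sub tendsto_const_nhds).norm
    have h3 := le_of_tendsto h2 (Filter.Eventually.of_forall hcl2)
    calc ‖Z t - Z s - Ξ s t‖ ≤ (C * Ω ^ e * (ω s t ^ e * ω s t)) * (1 - q)⁻¹ := h3
      _ = K1 * (ω s t ^ e * ω s t) := by rw [hK1def]; ring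
  -- sharp estimate via the balanced grid of [s, t]
  refine ⟨Z, C * (1 - q2)⁻¹, ?_, ?_⟩
  · have h2 : (0:ℝ) < 1 - q2 := by linarith
    positivity
  intro s t h0 hst htT
  set gl : ℕ → ℕ → ℝ := ctrlGrid hω s t with hgldef
  have glp : ∀ n : ℕ, (∀ i, s ≤ gl n i ∧ gl n i ≤ t) ∧ gl n 0 = s ∧
      (∀ i, 2 ^ n ≤ i → gl n i = t) ∧ (∀ i, gl n i ≤ gl n (i + 1)) ∧
      (∀ i, ω (gl n i) (gl n (i + 1)) ≤ ω s t / 2 ^ n) :=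
    fun n => ctrlGrid_props hω h0 hst htT n
  set P : ℕ → F := fun n => ∑ i ∈ Finset.range (2 ^ n), Ξ (gl n i) (gl n (i + 1)) with hPdef
  have hglmem : ∀ n i, 0 ≤ gl n i ∧ gl n i ≤ T := fun n i =>
    ⟨le_trans h0 ((glp n).1 i).1, le_trans ((glp n).1 i).2 htT⟩
  have hωst0 : 0 ≤ ω s t := hnn s t h0 hst htT
  have hglchain : ∀ n, ∑ i ∈ Finset.range (2 ^ n), ω (gl n i) (gl n (i + 1)) ≤ ω s t := by
    intro n
    have := ctrl_chain hω (gl n) ((glp n).2.2.2.1)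
      (by rw [(glp n).2.1]; exact h0) (fun i => (hglmem n i).2) (2 ^ n)
    rwa [(glp n).2.1, (glp n).2.2.1 (2 ^ n) le_rfl] at this
  have hPd : ∀ n, ‖P (n + 1) - P n‖ ≤ (C * (ω s t ^ (θ - 1) * ω s t)) * q2 ^ n := by
    intro n
    have h2pow : 2 ^ (n + 1) = 2 * 2 ^ n := by ring
    have hrw : P (n + 1) - P n = ∑ j ∈ Finset.range (2 ^ n),
        ((Ξ (gl n j) (gl (n + 1) (2 * j + 1)) + Ξ (gl (n + 1) (2 * j + 1)) (gl n (j + 1))) -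
          Ξ (gl n j) (gl n (j + 1))) := by
      rw [hPdef]
      simp only []
      rw [h2pow, sum_range_two_mul, ← Finset.sum_sub_distrib]
      apply Finset.sum_congr rfl
      intro j _
      rw [show 2 * j + 1 + 1 = 2 * (j + 1) by ring, hgldef, ctrlGrid_even, ctrlGrid_even]
    rw [hrw]
    have hterm : ∀ j ∈ Finset.range (2 ^ n),
        ‖(Ξ (gl n j) (gl (n + 1) (2 * j + 1)) + Ξ (gl (n + 1) (2 * j + 1)) (gl n (j + 1))) -
          Ξ (gl n j) (gl n (j + 1))‖ ≤
          (C * ω s t ^ (θ - 1) * q2 ^ n) * ω (gl n j) (gl n (j + 1)) := by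
      intro j _
      have hab1 : gl n j ≤ gl (n + 1) (2 * j + 1) := by
        have := (glp (n + 1)).2.2.2.1 (2 * j)
        rwa [hgldef, ctrlGrid_even] at this
      have hab2 : gl (n + 1) (2 * j + 1) ≤ gl n (j + 1) := by
        have := (glp (n + 1)).2.2.2.1 (2 * j + 1)
        rwa [show 2 * j + 1 + 1 = 2 * (j + 1) by ring, hgldef, ctrlGrid_even] at this
      have h1 := hδ (gl n j) (gl (n + 1) (2 * j + 1)) (gl n (j + 1)) (hglmem n j).1 hab1
        hab2 (hglmem n (j + 1)).2
      have hneg : (Ξ (gl n j) (gl (n + 1) (2 * j + 1)) +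
          Ξ (gl (n + 1) (2 * j + 1)) (gl n (j + 1))) - Ξ (gl n j) (gl n (j + 1))
          = -(Ξ (gl n j) (gl n (j + 1)) - Ξ (gl n j) (gl (n + 1) (2 * j + 1)) -
            Ξ (gl (n + 1) (2 * j + 1)) (gl n (j + 1))) := by abel
      rw [hneg, norm_neg]
      have hωj0 : 0 ≤ ω (gl n j) (gl n (j + 1)) :=
        hnn _ _ (hglmem n j).1 ((glp n).2.2.2.1 j) (hglmem n (j + 1)).2
      have hsp := hsplit2 (ω (gl n j) (gl n (j + 1))) (ω s t / 2 ^ n) hωj0 (by positivity)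
        ((glp n).2.2.2.2 j)
      rw [div_pow_rpow (ω s t) hωst0 (θ - 1) n, ← hq2def] at hsp
      calc ‖Ξ (gl n j) (gl n (j + 1)) - Ξ (gl n j) (gl (n + 1) (2 * j + 1)) -
            Ξ (gl (n + 1) (2 * j + 1)) (gl n (j + 1))‖
          ≤ C * ω (gl n j) (gl n (j + 1)) ^ θ := h1
        _ ≤ C * (ω s t ^ (θ - 1) * q2 ^ n * ω (gl n j) (gl n (j + 1))) :=
            mul_le_mul_of_nonneg_left hsp hC
        _ = (C * ω s t ^ (θ - 1) * q2 ^ n) * ω (gl n j) (gl n (j + 1)) := by ring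
    have hcoefnn : (0:ℝ) ≤ C * ω s t ^ (θ - 1) * q2 ^ n := by
      have := Real.rpow_nonneg hωst0 (θ - 1)
      positivity
    calc ‖∑ j ∈ Finset.range (2 ^ n),
        ((Ξ (gl n j) (gl (n + 1) (2 * j + 1)) + Ξ (gl (n + 1) (2 * j + 1)) (gl n (j + 1))) -
          Ξ (gl n j) (gl n (j + 1)))‖
        ≤ ∑ j ∈ Finset.range (2 ^ n),
          ‖(Ξ (gl n j) (gl (n + 1) (2 * j + 1)) + Ξ (gl (n + 1) (2 * j + 1)) (gl n (j + 1))) -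
          Ξ (gl n j) (gl n (j + 1))‖ := norm_sum_le _ _
      _ ≤ ∑ j ∈ Finset.range (2 ^ n),
          (C * ω s t ^ (θ - 1) * q2 ^ n) * ω (gl n j) (gl n (j + 1)) :=
          Finset.sum_le_sum hterm
      _ = (C * ω s t ^ (θ - 1) * q2 ^ n) *
          ∑ j ∈ Finset.range (2 ^ n), ω (gl n j) (gl n (j + 1)) := (Finset.mul_sum _ _ _).symm
      _ ≤ (C * ω s t ^ (θ - 1) * q2 ^ n) * ω s t :=
          mul_le_mul_of_nonneg_left (hglchain n) hcoefnn
      _ = (C * (ω s t ^ (θ - 1) * ω s t)) * q2 ^ n := by ring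
  have hP0 : P 0 = Ξ s t := by
    rw [hPdef]
    simp only [pow_zero, Finset.sum_range_one]
    rw [(glp 0).2.1, (glp 0).2.2.1 1 le_rfl]
  have hPclose : ∀ n, ‖P n - Ξ s t‖ ≤ (C * (ω s t ^ (θ - 1) * ω s t)) * (1 - q2)⁻¹ := by
    intro n
    have h1 := norm_telescope P (fun k => (C * (ω s t ^ (θ - 1) * ω s t)) * q2 ^ k) hPd n
    rw [hP0] at h1
    refine le_trans h1 ?_
    rw [← Finset.mul_sum]
    apply mul_le_mul_of_nonneg_left (geom_partial_le hq20.le hq21 n)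
    have := Real.rpow_nonneg hωst0 (θ - 1)
    positivity
  have hPtoZ : Filter.Tendsto P Filter.atTop (nhds (Z t - Z s)) := by
    have hb : ∀ n, ‖(Z t - Z s) - P n‖ ≤ (K1 * (ω s t ^ e * ω s t)) * q ^ n := by
      intro n
      have htel : Z t - Z s = ∑ i ∈ Finset.range (2 ^ n), (Z (gl n (i + 1)) - Z (gl n i)) := by
        rw [Finset.sum_range_sub (fun i => Z (gl n i))]
        rw [(glp n).2.1, (glp n).2.2.1 (2 ^ n) le_rfl]
      have hrw : (Z t - Z s) - P n = ∑ i ∈ Finset.range (2 ^ n),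
          ((Z (gl n (i + 1)) - Z (gl n i)) - Ξ (gl n i) (gl n (i + 1))) := by
        rw [htel, hPdef, ← Finset.sum_sub_distrib]
      rw [hrw]
      have hrpnn : (0:ℝ) ≤ (ω s t / 2 ^ n) ^ e := Real.rpow_nonneg (by positivity) e
      have hterm : ∀ i ∈ Finset.range (2 ^ n),
          ‖(Z (gl n (i + 1)) - Z (gl n i)) - Ξ (gl n i) (gl n (i + 1))‖
          ≤ (K1 * (ω s t / 2 ^ n) ^ e) * ω (gl n i) (gl n (i + 1)) := by
        intro i _
        have h1 := hG (gl n i) (gl n (i + 1)) (hglmem n i).1 ((glp n).2.2.2.1 i)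
          (hglmem n (i + 1)).2
        refine le_trans h1 ?_
        have hωj0 : 0 ≤ ω (gl n i) (gl n (i + 1)) :=
          hnn _ _ (hglmem n i).1 ((glp n).2.2.2.1 i) (hglmem n (i + 1)).2
        have h2 : ω (gl n i) (gl n (i + 1)) ^ e ≤ (ω s t / 2 ^ n) ^ e :=
          Real.rpow_le_rpow hωj0 ((glp n).2.2.2.2 i) he.le
        calc K1 * (ω (gl n i) (gl n (i + 1)) ^ e * ω (gl n i) (gl n (i + 1)))
            ≤ K1 * ((ω s t / 2 ^ n) ^ e * ω (gl n i) (gl n (i + 1))) :=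
              mul_le_mul_of_nonneg_left (mul_le_mul_of_nonneg_right h2 hωj0) hK1nn
          _ = (K1 * (ω s t / 2 ^ n) ^ e) * ω (gl n i) (gl n (i + 1)) := by ring
      calc ‖∑ i ∈ Finset.range (2 ^ n),
          ((Z (gl n (i + 1)) - Z (gl n i)) - Ξ (gl n i) (gl n (i + 1)))‖
          ≤ ∑ i ∈ Finset.range (2 ^ n),
            ‖(Z (gl n (i + 1)) - Z (gl n i)) - Ξ (gl n i) (gl n (i + 1))‖ := norm_sum_le _ _
        _ ≤ ∑ i ∈ Finset.range (2 ^ n),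
            (K1 * (ω s t / 2 ^ n) ^ e) * ω (gl n i) (gl n (i + 1)) := Finset.sum_le_sum hterm
        _ = (K1 * (ω s t / 2 ^ n) ^ e) *
            ∑ i ∈ Finset.range (2 ^ n), ω (gl n i) (gl n (i + 1)) := (Finset.mul_sum _ _ _).symm
        _ ≤ (K1 * (ω s t / 2 ^ n) ^ e) * ω s t :=
            mul_le_mul_of_nonneg_left (hglchain n) (by positivity)
        _ = (K1 * (ω s t ^ e * ω s t)) * q ^ n := by
            rw [div_pow_rpow (ω s t) hωst0 e n, ← hqdef]; ring
    have hb0 : Filter.Tendsto (fun n : ℕ => (K1 * (ω s t ^ e * ω s t)) * q ^ n)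
        Filter.atTop (nhds 0) := by
      have := tendsto_pow_atTop_nhds_zero_of_lt_one hq0.le hq1
      simpa using this.const_mul (K1 * (ω s t ^ e * ω s t))
    have h3 := squeeze_zero_norm hb hb0
    have h4 := Filter.Tendsto.const_sub (Z t - Z s) h3
    have h5 : ∀ n, (Z t - Z s) - ((Z t - Z s) - P n) = P n := fun n => by abel
    have h6 := Filter.Tendsto.congr h5 h4
    simpa using h6
  have h6 : Filter.Tendsto (fun n => ‖P n - Ξ s t‖) Filter.atTop
      (nhds ‖Z t - Z s - Ξ s t‖) := (hPtoZ.sub tendsto_const_nhds).norm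
  have h7 := le_of_tendsto h6 (Filter.Eventually.of_forall hPclose)
  have hωθ : ω s t ^ (θ - 1) * ω s t = ω s t ^ θ := by
    have h8 : ω s t ^ ((θ - 1) + 1) = ω s t ^ (θ - 1) * ω s t := by
      rw [Real.rpow_add' hωst0 (by linarith), Real.rpow_one]
    rw [← h8]
    congr 1
    ring
  calc ‖Z t - Z s - Ξ s t‖ ≤ (C * (ω s t ^ (θ - 1) * ω s t)) * (1 - q2)⁻¹ := h7
    _ = (C * (1 - q2)⁻¹) * ω s t ^ θ := by rw [hωθ]; ring

/-- transformation of a partial rough path `(x, y, A)` by a `Lip(1+κ)`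
map `φ`: there is a unique cross-iterated integral `B = ∫ dφ(y) ⊗ dx` satisfying the
Chen relation and close to `Dφ(y_s) A_{s,t}` at order `ω(s,t)^{(2+κ)/p}`. -/
theorem partial_rough_path_transform {m d d' : ℕ} (p κ T K L Mφ Hφ : ℝ)
    (hp2 : 2 ≤ p) (hp3 : p < 3) (hκ0 : 0 < κ) (hκ1 : κ ≤ 1) (hκp : p < 2 + κ) (hT : 0 < T)
    (ω : ℝ → ℝ → ℝ) (hω : IsControl T ω)
    (x : ℝ → E m) (y : ℝ → E d)
    (hx : ∀ s t, 0 ≤ s → s ≤ t → t ≤ T → ‖x t - x s‖ ≤ K * ω s t ^ (1 / p))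
    (hy : ∀ s t, 0 ≤ s → s ≤ t → t ≤ T → ‖y t - y s‖ ≤ K * ω s t ^ (1 / p))
    (A : ℝ → ℝ → EuclideanSpace ℝ (Fin d × Fin m))
    (hA : ∀ s t, 0 ≤ s → s ≤ t → t ≤ T → ‖A s t‖ ≤ L * ω s t ^ (2 / p))
    (hAchen : ∀ s u t, 0 ≤ s → s ≤ u → u ≤ t → t ≤ T →
      A s t = A s u + A u t + tensor (y u - y s) (x t - x u))
    (φ : E d → E d') (hφdiff : Differentiable ℝ φ)
    (hφb : ∀ v, ‖fderiv ℝ φ v‖ ≤ Mφ)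
    (hφH : ∀ v v', ‖fderiv ℝ φ v - fderiv ℝ φ v'‖ ≤ Hφ * ‖v - v'‖ ^ κ) :
    ∃ B : ℝ → ℝ → EuclideanSpace ℝ (Fin d' × Fin m),
      (∀ s u t, 0 ≤ s → s ≤ u → u ≤ t → t ≤ T →
        B s t = B s u + B u t + tensor (φ (y u) - φ (y s)) (x t - x u)) ∧
      (∃ Cb : ℝ, 0 ≤ Cb ∧ ∀ s t, 0 ≤ s → s ≤ t → t ≤ T →
        ‖B s t - lTensor (fderiv ℝ φ (y s)) (A s t)‖ ≤ Cb * ω s t ^ ((2 + κ) / p)) ∧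
      (∃ L' : ℝ, 0 ≤ L' ∧ ∀ s t, 0 ≤ s → s ≤ t → t ≤ T →
        ‖B s t‖ ≤ L' * ω s t ^ (2 / p)) ∧
      (∀ B' : ℝ → ℝ → EuclideanSpace ℝ (Fin d' × Fin m),
        (∀ s u t, 0 ≤ s → s ≤ u → u ≤ t → t ≤ T →
          B' s t = B' s u + B' u t + tensor (φ (y u) - φ (y s)) (x t - x u)) →
        (∃ Cb' : ℝ, 0 ≤ Cb' ∧ ∀ s t, 0 ≤ s → s ≤ t → t ≤ T →
          ‖B' s t - lTensor (fderiv ℝ φ (y s)) (A s t)‖ ≤ Cb' * ω s t ^ ((2 + κ) / p)) →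
        ∀ s t, 0 ≤ s → s ≤ t → t ≤ T → B' s t = B s t) := by
  have hp0 : (0:ℝ) < p := by linarith
  set θ : ℝ := (2 + κ) / p with hθdef
  have hθ1 : 1 < θ := by rw [hθdef]; exact (one_lt_div hp0).mpr hκp
  set K' : ℝ := max K 0 with hK'def
  set L2 : ℝ := max L 0 with hL2def
  set H' : ℝ := max Hφ 0 with hH'def
  have hK'0 : 0 ≤ K' := le_max_right _ _
  have hL20 : 0 ≤ L2 := le_max_right _ _
  have hH'0 : 0 ≤ H' := le_max_right _ _
  have hMφ0 : 0 ≤ Mφ := le_trans (norm_nonneg _) (hφb (y 0))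
  obtain ⟨hcont, hnn, hzero, hsup⟩ := id hω
  have hx' : ∀ s t, 0 ≤ s → s ≤ t → t ≤ T → ‖x t - x s‖ ≤ K' * ω s t ^ (1 / p) := by
    intro s t h0 hst htT
    exact le_trans (hx s t h0 hst htT) (mul_le_mul_of_nonneg_right (le_max_left _ _)
      (Real.rpow_nonneg (hnn s t h0 hst htT) _))
  have hy' : ∀ s t, 0 ≤ s → s ≤ t → t ≤ T → ‖y t - y s‖ ≤ K' * ω s t ^ (1 / p) := by
    intro s t h0 hst htT
    exact le_trans (hy s t h0 hst htT) (mul_le_mul_of_nonneg_right (le_max_left _ _)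
      (Real.rpow_nonneg (hnn s t h0 hst htT) _))
  have hA' : ∀ s t, 0 ≤ s → s ≤ t → t ≤ T → ‖A s t‖ ≤ L2 * ω s t ^ (2 / p) := by
    intro s t h0 hst htT
    exact le_trans (hA s t h0 hst htT) (mul_le_mul_of_nonneg_right (le_max_left _ _)
      (Real.rpow_nonneg (hnn s t h0 hst htT) _))
  have hφH' : ∀ v v', ‖fderiv ℝ φ v - fderiv ℝ φ v'‖ ≤ H' * ‖v - v'‖ ^ κ := by
    intro v v'
    exact le_trans (hφH v v') (mul_le_mul_of_nonneg_right (le_max_left _ _)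
      (Real.rpow_nonneg (norm_nonneg _) _))
  set Ξ : ℝ → ℝ → EuclideanSpace ℝ (Fin d' × Fin m) :=
    fun s t => lTensor (fderiv ℝ φ (y s)) (A s t) + tensor (φ (y s)) (x t - x s) with hΞdef
  -- Taylor estimate with Hölder remainder
  have hTay : ∀ a b : E d, ‖fderiv ℝ φ a (b - a) - (φ b - φ a)‖ ≤
      H' * ‖b - a‖ ^ κ * ‖b - a‖ := by
    intro a b
    have hconv : Convex ℝ (Metric.closedBall a ‖b - a‖) := convex_closedBall _ _
    have hbd : ∀ z ∈ Metric.closedBall a ‖b - a‖,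
        ‖fderiv ℝ φ z - fderiv ℝ φ a‖ ≤ H' * ‖b - a‖ ^ κ := by
      intro z hz
      refine le_trans (hφH' z a) (mul_le_mul_of_nonneg_left ?_ hH'0)
      apply Real.rpow_le_rpow (norm_nonneg _) ?_ hκ0.le
      rw [Metric.mem_closedBall, dist_eq_norm] at hz
      exact hz
    have h1 := hconv.norm_image_sub_le_of_norm_fderiv_le' (fun z _ => hφdiff z) hbd
      (Metric.mem_closedBall_self (norm_nonneg _))
      (show b ∈ Metric.closedBall a ‖b - a‖ by
        rw [Metric.mem_closedBall, dist_eq_norm])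
    rw [show fderiv ℝ φ a (b - a) - (φ b - φ a) =
      -(φ b - φ a - fderiv ℝ φ a (b - a)) by abel, norm_neg]
    exact h1
  -- the almost-additivity bound for Ξ
  have hδΞ : ∀ s u t, 0 ≤ s → s ≤ u → u ≤ t → t ≤ T →
      ‖Ξ s t - Ξ s u - Ξ u t‖ ≤ (H' * K' ^ κ * (L2 + K' * K')) * ω s t ^ θ := by
    intro s u t h0 hsu hut htT
    have hst : s ≤ t := le_trans hsu hut
    have hωnn : 0 ≤ ω s t := hnn s t h0 hst htT
    have hid : Ξ s t - Ξ s u - Ξ u t = lTensor (fderiv ℝ φ (y s) - fderiv ℝ φ (y u)) (A u t) +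
        tensor (fderiv ℝ φ (y s) (y u - y s) - (φ (y u) - φ (y s))) (x t - x u) := by
      rw [hΞdef]
      simp only []
      rw [hAchen s u t h0 hsu hut htT, lTensor_add, lTensor_add, lTensor_tensor, lTensor_sub',
        show x t - x s = (x u - x s) + (x t - x u) by abel, tensor_add_right,
        tensor_sub_left, tensor_sub_left]
      abel
    rw [hid]
    -- common bounds
    have hyb : ‖y u - y s‖ ≤ K' * ω s t ^ (1 / p) := by
      refine le_trans (hy' s u h0 hsu (le_trans hut htT)) ?_
      exact mul_le_mul_of_nonneg_left (Real.rpow_le_rpow (hnn s u h0 hsu (le_trans hut htT))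
        (ctrl_mono hω h0 le_rfl hsu hut htT) (by positivity)) hK'0
    have hxb : ‖x t - x u‖ ≤ K' * ω s t ^ (1 / p) := by
      refine le_trans (hx' u t (le_trans h0 hsu) hut htT) ?_
      exact mul_le_mul_of_nonneg_left (Real.rpow_le_rpow (hnn u t (le_trans h0 hsu) hut htT)
        (ctrl_mono hω h0 hsu hut le_rfl htT) (by positivity)) hK'0
    have hW0 : 0 ≤ K' * ω s t ^ (1 / p) := mul_nonneg hK'0 (Real.rpow_nonneg hωnn _)
    have hWκ : (K' * ω s t ^ (1 / p)) ^ κ = K' ^ κ * ω s t ^ (κ / p) := by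
      rw [Real.mul_rpow hK'0 (Real.rpow_nonneg hωnn _), ← Real.rpow_mul hωnn,
        show 1 / p * κ = κ / p by ring]
    have hκp0 : (0:ℝ) ≤ K' ^ κ := Real.rpow_nonneg hK'0 _
    have hωκp0 : (0:ℝ) ≤ ω s t ^ (κ / p) := Real.rpow_nonneg hωnn _
    have hω2p0 : (0:ℝ) ≤ ω s t ^ (2 / p) := Real.rpow_nonneg hωnn _
    have hb1 : ‖lTensor (fderiv ℝ φ (y s) - fderiv ℝ φ (y u)) (A u t)‖ ≤
        (H' * K' ^ κ * L2) * (ω s t ^ (κ / p) * ω s t ^ (2 / p)) := by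
      refine le_trans (lTensor_norm_le _ _) ?_
      have h1 : ‖fderiv ℝ φ (y s) - fderiv ℝ φ (y u)‖ ≤ H' * (K' * ω s t ^ (1 / p)) ^ κ := by
        refine le_trans (hφH' (y s) (y u)) (mul_le_mul_of_nonneg_left ?_ hH'0)
        rw [norm_sub_rev]
        exact Real.rpow_le_rpow (norm_nonneg _) hyb hκ0.le
      have h4 : ‖A u t‖ ≤ L2 * ω s t ^ (2 / p) := by
        refine le_trans (hA' u t (le_trans h0 hsu) hut htT) ?_
        exact mul_le_mul_of_nonneg_left (Real.rpow_le_rpow (hnn u t (le_trans h0 hsu) hut htT)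
          (ctrl_mono hω h0 hsu hut le_rfl htT) (by positivity)) hL20
      calc ‖fderiv ℝ φ (y s) - fderiv ℝ φ (y u)‖ * ‖A u t‖
          ≤ (H' * (K' * ω s t ^ (1 / p)) ^ κ) * (L2 * ω s t ^ (2 / p)) :=
            mul_le_mul h1 h4 (norm_nonneg _)
              (mul_nonneg hH'0 (Real.rpow_nonneg hW0 _))
        _ = (H' * K' ^ κ * L2) * (ω s t ^ (κ / p) * ω s t ^ (2 / p)) := by
            rw [hWκ]; ring
    have hb2 : ‖tensor (fderiv ℝ φ (y s) (y u - y s) - (φ (y u) - φ (y s))) (x t - x u)‖ ≤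
        (H' * K' ^ κ * (K' * K')) * (ω s t ^ (κ / p) * ω s t ^ (2 / p)) := by
      rw [tensor_norm]
      have h5 := hTay (y s) (y u)
      have h6 : H' * ‖y u - y s‖ ^ κ * ‖y u - y s‖ ≤
          H' * (K' * ω s t ^ (1 / p)) ^ κ * (K' * ω s t ^ (1 / p)) := by
        apply mul_le_mul _ hyb (norm_nonneg _) (mul_nonneg hH'0 (Real.rpow_nonneg hW0 _))
        exact mul_le_mul_of_nonneg_left
          (Real.rpow_le_rpow (norm_nonneg _) hyb hκ0.le) hH'0
      have hω2 : ω s t ^ (1 / p) * ω s t ^ (1 / p) = ω s t ^ (2 / p) := by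
        have he : (1:ℝ) / p + 1 / p = 2 / p := by ring
        rw [← Real.rpow_add' hωnn (by rw [he]; positivity), he]
      calc ‖fderiv ℝ φ (y s) (y u - y s) - (φ (y u) - φ (y s))‖ * ‖x t - x u‖
          ≤ (H' * (K' * ω s t ^ (1 / p)) ^ κ * (K' * ω s t ^ (1 / p))) *
            (K' * ω s t ^ (1 / p)) := by
            apply mul_le_mul (le_trans h5 h6) hxb (norm_nonneg _)
            have := Real.rpow_nonneg hW0 κ
            positivity
        _ = (H' * K' ^ κ * (K' * K')) * (ω s t ^ (κ / p) * ω s t ^ (2 / p)) := by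
            rw [hWκ, ← hω2]; ring
    have hωθ : ω s t ^ (κ / p) * ω s t ^ (2 / p) = ω s t ^ θ := by
      have he : κ / p + 2 / p = θ := by rw [hθdef]; ring
      rw [← Real.rpow_add' hωnn (by rw [he]; linarith), he]
    calc ‖lTensor (fderiv ℝ φ (y s) - fderiv ℝ φ (y u)) (A u t) +
        tensor (fderiv ℝ φ (y s) (y u - y s) - (φ (y u) - φ (y s))) (x t - x u)‖
        ≤ ‖lTensor (fderiv ℝ φ (y s) - fderiv ℝ φ (y u)) (A u t)‖ +
          ‖tensor (fderiv ℝ φ (y s) (y u - y s) - (φ (y u) - φ (y s))) (x t - x u)‖ :=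
          norm_add_le _ _
      _ ≤ (H' * K' ^ κ * L2) * (ω s t ^ (κ / p) * ω s t ^ (2 / p)) +
          (H' * K' ^ κ * (K' * K')) * (ω s t ^ (κ / p) * ω s t ^ (2 / p)) := add_le_add hb1 hb2
      _ = (H' * K' ^ κ * (L2 + K' * K')) * ω s t ^ θ := by rw [← hωθ]; ring
  have hCδ0 : 0 ≤ H' * K' ^ κ * (L2 + K' * K') := by
    have := Real.rpow_nonneg hK'0 κ
    positivity
  obtain ⟨Z, C', hC'0, hZ⟩ := sewing hω hT.le hθ1 hCδ0 Ξ hδΞ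
  set B : ℝ → ℝ → EuclideanSpace ℝ (Fin d' × Fin m) :=
    fun s t => Z t - Z s - tensor (φ (y s)) (x t - x s) with hBdef
  have hBsub : ∀ s t, B s t - lTensor (fderiv ℝ φ (y s)) (A s t) = Z t - Z s - Ξ s t := by
    intro s t
    rw [hBdef, hΞdef]
    simp only []
    abel
  have hchen : ∀ s u t, 0 ≤ s → s ≤ u → u ≤ t → t ≤ T →
      B s t = B s u + B u t + tensor (φ (y u) - φ (y s)) (x t - x u) := by
    intro s u t _ _ _ _
    rw [hBdef]
    simp only []
    ext pp
    simp only [tensor, PiLp.add_apply, PiLp.sub_apply, PiLp.toLp_apply]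
    ring
  set Ω : ℝ := ω 0 T with hΩdef
  have hΩ0 : 0 ≤ Ω := hnn 0 T le_rfl hT.le le_rfl
  refine ⟨B, hchen, ⟨C', hC'0, fun s t h0 hst htT => by
      rw [hBsub]; exact hZ s t h0 hst htT⟩,
    ⟨C' * Ω ^ (κ / p) + Mφ * L2, ?_, ?_⟩, ?_⟩
  · have := Real.rpow_nonneg hΩ0 (κ / p)
    positivity
  · intro s t h0 hst htT
    have hωnn := hnn s t h0 hst htT
    have h1 : ‖B s t‖ ≤ ‖B s t - lTensor (fderiv ℝ φ (y s)) (A s t)‖ +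
        ‖lTensor (fderiv ℝ φ (y s)) (A s t)‖ := by
      have h2 : B s t = (B s t - lTensor (fderiv ℝ φ (y s)) (A s t)) +
          lTensor (fderiv ℝ φ (y s)) (A s t) := by abel
      conv_lhs => rw [h2]
      exact norm_add_le _ _
    have h2 : ‖B s t - lTensor (fderiv ℝ φ (y s)) (A s t)‖ ≤ C' * ω s t ^ θ := by
      rw [hBsub]; exact hZ s t h0 hst htT
    have h3 : ‖lTensor (fderiv ℝ φ (y s)) (A s t)‖ ≤ Mφ * (L2 * ω s t ^ (2 / p)) := by
      refine le_trans (lTensor_norm_le _ _) ?_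
      exact mul_le_mul (hφb _) (hA' s t h0 hst htT) (norm_nonneg _) hMφ0
    have h4 : ω s t ^ θ ≤ Ω ^ (κ / p) * ω s t ^ (2 / p) := by
      have h5 : ω s t ^ θ = ω s t ^ (κ / p) * ω s t ^ (2 / p) := by
        have he : κ / p + 2 / p = θ := by rw [hθdef]; ring
        rw [← Real.rpow_add' hωnn (by rw [he]; linarith), he]
      rw [h5]
      exact mul_le_mul_of_nonneg_right (Real.rpow_le_rpow hωnn
        (ctrl_mono hω le_rfl h0 hst htT le_rfl) (by positivity))
        (Real.rpow_nonneg hωnn _)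
    calc ‖B s t‖ ≤ ‖B s t - lTensor (fderiv ℝ φ (y s)) (A s t)‖ +
        ‖lTensor (fderiv ℝ φ (y s)) (A s t)‖ := h1
      _ ≤ C' * (Ω ^ (κ / p) * ω s t ^ (2 / p)) + Mφ * (L2 * ω s t ^ (2 / p)) :=
          add_le_add (le_trans h2 (mul_le_mul_of_nonneg_left h4 hC'0)) h3
      _ = (C' * Ω ^ (κ / p) + Mφ * L2) * ω s t ^ (2 / p) := by ring
  · intro B' hchen' hEx s t h0 hst htT
    obtain ⟨Cb', hCb'0, hb'⟩ := hEx
    have hDb : ∀ a b, 0 ≤ a → a ≤ b → b ≤ T →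
        ‖B' a b - B a b‖ ≤ (Cb' + C') * ω a b ^ θ := by
      intro a b ha hab hbT
      have h1 : B' a b - B a b = (B' a b - lTensor (fderiv ℝ φ (y a)) (A a b)) -
          (B a b - lTensor (fderiv ℝ φ (y a)) (A a b)) := by abel
      rw [h1]
      refine le_trans (norm_sub_le _ _) ?_
      rw [add_mul]
      exact add_le_add (hb' a b ha hab hbT)
        (by rw [hBsub]; exact hZ a b ha hab hbT)
    set gl : ℕ → ℕ → ℝ := ctrlGrid hω s t with hgldef
    have glp : ∀ n : ℕ, (∀ i, s ≤ gl n i ∧ gl n i ≤ t) ∧ gl n 0 = s ∧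
        (∀ i, 2 ^ n ≤ i → gl n i = t) ∧ (∀ i, gl n i ≤ gl n (i + 1)) ∧
        (∀ i, ω (gl n i) (gl n (i + 1)) ≤ ω s t / 2 ^ n) :=
      fun n => ctrlGrid_props hω h0 hst htT n
    have hglmem : ∀ n i, 0 ≤ gl n i ∧ gl n i ≤ T := fun n i =>
      ⟨le_trans h0 ((glp n).1 i).1, le_trans ((glp n).1 i).2 htT⟩
    have hωst0 : 0 ≤ ω s t := hnn s t h0 hst htT
    have key : ∀ n, B' s t - B s t = ∑ i ∈ Finset.range (2 ^ n),
        (B' (gl n i) (gl n (i + 1)) - B (gl n i) (gl n (i + 1))) := by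
      intro n
      induction n with
      | zero =>
        rw [pow_zero, Finset.sum_range_one, (glp 0).2.1, (glp 0).2.2.1 1 le_rfl]
      | succ n ih =>
        rw [ih, show (2:ℕ) ^ (n + 1) = 2 * 2 ^ n by ring, sum_range_two_mul]
        apply Finset.sum_congr rfl
        intro j _
        have e2 : gl (n + 1) (2 * j) = gl n j := by
          rw [hgldef]; exact ctrlGrid_even hω s t n j
        have e3 : gl (n + 1) (2 * j + 1 + 1) = gl n (j + 1) := by
          rw [show 2 * j + 1 + 1 = 2 * (j + 1) by ring, hgldef]
          exact ctrlGrid_even hω s t n (j + 1)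
        have hord1 : gl n j ≤ gl (n + 1) (2 * j + 1) := by
          have := (glp (n + 1)).2.2.2.1 (2 * j)
          rwa [e2] at this
        have hord2 : gl (n + 1) (2 * j + 1) ≤ gl n (j + 1) := by
          have := (glp (n + 1)).2.2.2.1 (2 * j + 1)
          rwa [e3] at this
        have hB'c := hchen' (gl n j) (gl (n + 1) (2 * j + 1)) (gl n (j + 1))
          (hglmem n j).1 hord1 hord2 (hglmem n (j + 1)).2
        have hBc := hchen (gl n j) (gl (n + 1) (2 * j + 1)) (gl n (j + 1))
          (hglmem n j).1 hord1 hord2 (hglmem n (j + 1)).2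
        rw [e2, e3, hB'c, hBc]
        abel
    set q2 : ℝ := (1 / 2 : ℝ) ^ (θ - 1) with hq2def
    have hq20 : 0 < q2 := Real.rpow_pos_of_pos (by norm_num) _
    have hq21 : q2 < 1 := Real.rpow_lt_one (by norm_num) (by norm_num) (by linarith)
    have hbound : ∀ n, ‖B' s t - B s t‖ ≤
        ((Cb' + C') * (ω s t ^ (θ - 1) * ω s t)) * q2 ^ n := by
      intro n
      rw [key n]
      have hterm : ∀ i ∈ Finset.range (2 ^ n),
          ‖B' (gl n i) (gl n (i + 1)) - B (gl n i) (gl n (i + 1))‖ ≤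
          ((Cb' + C') * ω s t ^ (θ - 1) * q2 ^ n) * ω (gl n i) (gl n (i + 1)) := by
        intro i _
        have h1 := hDb (gl n i) (gl n (i + 1)) (hglmem n i).1 ((glp n).2.2.2.1 i)
          (hglmem n (i + 1)).2
        have hωj0 : 0 ≤ ω (gl n i) (gl n (i + 1)) :=
          hnn _ _ (hglmem n i).1 ((glp n).2.2.2.1 i) (hglmem n (i + 1)).2
        have hsp := rpow_split2 hθ1 hωj0 (by positivity) ((glp n).2.2.2.2 i)
        rw [div_pow_rpow (ω s t) hωst0 (θ - 1) n, ← hq2def] at hsp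
        calc ‖B' (gl n i) (gl n (i + 1)) - B (gl n i) (gl n (i + 1))‖
            ≤ (Cb' + C') * ω (gl n i) (gl n (i + 1)) ^ θ := h1
          _ ≤ (Cb' + C') * (ω s t ^ (θ - 1) * q2 ^ n * ω (gl n i) (gl n (i + 1))) :=
              mul_le_mul_of_nonneg_left hsp (by positivity)
          _ = ((Cb' + C') * ω s t ^ (θ - 1) * q2 ^ n) * ω (gl n i) (gl n (i + 1)) := by ring
      have hglchain : ∑ i ∈ Finset.range (2 ^ n), ω (gl n i) (gl n (i + 1)) ≤ ω s t := by
        have := ctrl_chain hω (gl n) ((glp n).2.2.2.1)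
          (by rw [(glp n).2.1]; exact h0) (fun i => (hglmem n i).2) (2 ^ n)
        rwa [(glp n).2.1, (glp n).2.2.1 (2 ^ n) le_rfl] at this
      have hcoefnn : (0:ℝ) ≤ (Cb' + C') * ω s t ^ (θ - 1) * q2 ^ n := by
        have := Real.rpow_nonneg hωst0 (θ - 1)
        positivity
      calc ‖∑ i ∈ Finset.range (2 ^ n),
          (B' (gl n i) (gl n (i + 1)) - B (gl n i) (gl n (i + 1)))‖
          ≤ ∑ i ∈ Finset.range (2 ^ n),
            ‖B' (gl n i) (gl n (i + 1)) - B (gl n i) (gl n (i + 1))‖ := norm_sum_le _ _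
        _ ≤ ∑ i ∈ Finset.range (2 ^ n),
            ((Cb' + C') * ω s t ^ (θ - 1) * q2 ^ n) * ω (gl n i) (gl n (i + 1)) :=
            Finset.sum_le_sum hterm
        _ = ((Cb' + C') * ω s t ^ (θ - 1) * q2 ^ n) *
            ∑ i ∈ Finset.range (2 ^ n), ω (gl n i) (gl n (i + 1)) :=
            (Finset.mul_sum _ _ _).symm
        _ ≤ ((Cb' + C') * ω s t ^ (θ - 1) * q2 ^ n) * ω s t :=
            mul_le_mul_of_nonneg_left hglchain hcoefnn
        _ = ((Cb' + C') * (ω s t ^ (θ - 1) * ω s t)) * q2 ^ n := by ring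
    have hlim : Filter.Tendsto
        (fun n : ℕ => ((Cb' + C') * (ω s t ^ (θ - 1) * ω s t)) * q2 ^ n)
        Filter.atTop (nhds 0) := by
      have := tendsto_pow_atTop_nhds_zero_of_lt_one hq20.le hq21
      simpa using this.const_mul ((Cb' + C') * (ω s t ^ (θ - 1) * ω s t))
    have h0le : ‖B' s t - B s t‖ ≤ 0 :=
      ge_of_tendsto hlim (Filter.Eventually.of_forall hbound)
    exact sub_eq_zero.mp (norm_le_zero_iff.mp h0le)
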